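/- arXiv:1502.04851 — 3 statements merged into one kernel-verified Lean document; each statement's English description precedes it below -/
import Mathlib

section
/- Let f be bounded, vanish on (−∞, 0], and satisfy f(t) ~ C_d t^{d−1} as t → ∞ with d ∈ (0, 1/2), C_d > 0. Fix ε = 1/m for m ∈ ℕ, and define v(t) := C(g(t) t^{d−1} 1_{(1,∞)}(t) + 1_{[−ε,1]}(t)) where g : [1,∞) → (0,∞) is bounded and decreasing with g(x) → 0 as x → ∞ and C > 0. Then for every integer n ≥ 1 and h ∈ ℕ₀: Σ_{i∈ℤ} |f(εi) v(n + h + εi)| = O(n^{2d−1} g(n)) as n → ∞. -/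
/-!
On `t > 0` the two hypotheses on `f` combine into `|f t| ≤ A t^(d-1)`. Only the terms with
`i ≥ 1` survive, and for those `n + h + εi > 1`, so by the monotonicity of `g` and of
`t ↦ t^(d-1)` the `i`-th term is at most `|C| A g(n) (εi)^(d-1) (n + εi)^(d-1)`.
Rescaling by `N = m n` leaves `Σ_j j^(d-1) (N + j)^(d-1)`, which is compared with integrals:
for `j ≤ N` the factor `(N + j)^(d-1)` is at most `N^(d-1)` and `Σ_{j ≤ N} j^(d-1) ≲ N^d / d`,
while for `j > N` the terms are at most `j^(2d-2)`, whose tail is at most `N^(2d-1) / (1 - 2d)`.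
-/

open Filter Asymptotics Finset

lemma exists_abs_le_mul_rpow_of_tendsto {f : ℝ → ℝ} {p K L : ℝ} (hp : p ≤ 0)
    (hf : ∀ t > 0, |f t| ≤ K * max 1 (t ^ p))
    (hlim : Tendsto (fun t => f t / t ^ p) atTop (nhds L)) :
    ∃ A, 0 ≤ A ∧ ∀ t > 0, |f t| ≤ A * t ^ p := by
  obtain ⟨T, hT⟩ := eventually_atTop.1 <|
    (hlim.abs.eventually (gt_mem_nhds (lt_add_one |L|))).and (eventually_gt_atTop 0)
  set T₁ := max T 1
  refine ⟨max (|L| + 1) (|K| * T₁ ^ (-p)), by positivity, fun t ht => ?_⟩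
  have htp : 0 < t ^ p := Real.rpow_pos_of_pos ht p
  rcases le_or_gt T t with hTt | htT
  · have hlt := (hT t hTt).1
    rw [abs_div, abs_of_pos htp, div_lt_iff₀ htp] at hlt
    exact hlt.le.trans (mul_le_mul_of_nonneg_right (le_max_left _ _) htp.le)
  · have hT₁ : 1 ≤ T₁ ^ (-p) := Real.one_le_rpow (le_max_right _ _) (neg_nonneg.2 hp)
    have hmax : max 1 (t ^ p) ≤ T₁ ^ (-p) * t ^ p := by
      refine max_le ?_ (le_mul_of_one_le_left htp.le hT₁)
      calc (1 : ℝ) = T₁ ^ (-p) * T₁ ^ p := by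
            rw [← Real.rpow_add (by positivity), neg_add_cancel, Real.rpow_zero]
        _ ≤ T₁ ^ (-p) * t ^ p := mul_le_mul_of_nonneg_left
            (Real.rpow_le_rpow_of_nonpos ht (htT.le.trans (le_max_left _ _)) hp) (by positivity)
    calc |f t| ≤ K * max 1 (t ^ p) := hf t ht
      _ ≤ |K| * (T₁ ^ (-p) * t ^ p) :=
          mul_le_mul (le_abs_self K) hmax (by positivity) (abs_nonneg K)
      _ ≤ _ := by
          rw [← mul_assoc]
          exact mul_le_mul_of_nonneg_right (le_max_right _ _) htp.le

lemma sum_range_add_succ_rpow_le {x₀ p : ℝ} (hx₀ : 0 < x₀) (hp : p ≤ 0) (hp1 : p ≠ -1) (a : ℕ) :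
    ∑ i ∈ range a, (x₀ + (i + 1)) ^ p ≤ ((x₀ + a) ^ (p + 1) - x₀ ^ (p + 1)) / (p + 1) := by
  have hanti : AntitoneOn (fun x : ℝ => x ^ p) (Set.Icc x₀ (x₀ + a)) :=
    fun x hx _ _ hxy => Real.rpow_le_rpow_of_nonpos (hx₀.trans_le hx.1) hxy hp
  have h0 : (0 : ℝ) ∉ Set.uIcc x₀ (x₀ + a) := by
    rw [Set.uIcc_of_le (le_add_of_nonneg_right a.cast_nonneg)]
    exact fun h => hx₀.not_ge h.1
  rw [← integral_rpow (Or.inr ⟨hp1, h0⟩)]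
  simpa using hanti.sum_le_integral

lemma sum_range_add_succ_rpow_le_of_lt_neg_one {x₀ q : ℝ} (hx₀ : 0 < x₀) (hq : q < -1)
    (M : ℕ) : ∑ k ∈ range M, (x₀ + (k + 1)) ^ q ≤ x₀ ^ (q + 1) / -(q + 1) := by
  calc _ ≤ ((x₀ + M) ^ (q + 1) - x₀ ^ (q + 1)) / (q + 1) :=
        sum_range_add_succ_rpow_le hx₀ (by linarith) hq.ne M
    _ = (x₀ ^ (q + 1) - (x₀ + M) ^ (q + 1)) / -(q + 1) := by rw [← neg_div_neg_eq, neg_sub]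
    _ ≤ _ := div_le_div_of_nonneg_right (sub_le_self _ (by positivity)) (by linarith)

lemma sum_range_succ_rpow_le {p : ℝ} (hp1 : -1 < p) (hp : p ≤ 0) (N : ℕ) :
    ∑ j ∈ range N, ((j : ℝ) + 1) ^ p ≤ 1 + (N : ℝ) ^ (p + 1) / (p + 1) := by
  have hp1' : 0 < p + 1 := by linarith
  rcases N with _ | N
  · simp [Real.zero_rpow hp1'.ne']
  have hint := sum_range_add_succ_rpow_le one_pos hp hp1.ne' N
  rw [Real.one_rpow, add_comm (1 : ℝ)] at hint
  have hdrop : (((N : ℝ) + 1) ^ (p + 1) - 1) / (p + 1) ≤ ((N : ℝ) + 1) ^ (p + 1) / (p + 1) := by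
    gcongr; linarith
  rw [sum_range_succ', Nat.cast_zero, zero_add, Real.one_rpow, Nat.cast_succ]
  calc _ = ∑ i ∈ range N, (1 + ((i : ℝ) + 1)) ^ p + 1 := by
          congr 1; refine sum_congr rfl fun i _ => ?_; push_cast; ring_nf
    _ ≤ _ := by linarith

lemma sum_range_rpow_mul_rpow_add_le {d : ℝ} (hd0 : 0 < d) (hd : d < 1 / 2) {N : ℕ}
    (hN : 1 ≤ N) (M : ℕ) :
    ∑ j ∈ range M, ((j : ℝ) + 1) ^ (d - 1) * (N + ((j : ℝ) + 1)) ^ (d - 1)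
      ≤ (1 + 1 / d + 1 / (1 - 2 * d)) * (N : ℝ) ^ (2 * d - 1) := by
  have hN0 : (0 : ℝ) < N := by exact_mod_cast hN
  have head : ∑ j ∈ range N, ((j : ℝ) + 1) ^ (d - 1) * (N + ((j : ℝ) + 1)) ^ (d - 1)
      ≤ (1 + 1 / d) * (N : ℝ) ^ (2 * d - 1) := calc
    _ ≤ ∑ j ∈ range N, (N : ℝ) ^ (d - 1) * ((j : ℝ) + 1) ^ (d - 1) := by
        refine sum_le_sum fun j _ => ?_
        rw [mul_comm]
        exact mul_le_mul_of_nonneg_right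
          (Real.rpow_le_rpow_of_nonpos hN0 (by linarith [j.cast_nonneg (α := ℝ)]) (by linarith))
          (by positivity)
    _ ≤ (N : ℝ) ^ (d - 1) * (1 + (N : ℝ) ^ d / d) := by
        rw [← mul_sum]
        gcongr
        simpa using sum_range_succ_rpow_le (p := d - 1) (by linarith) (by linarith) N
    _ = (N : ℝ) ^ (d - 1) + (N : ℝ) ^ (2 * d - 1) / d := by
        rw [mul_add, mul_one, mul_div_assoc', ← Real.rpow_add hN0]; ring_nf
    _ ≤ (1 + 1 / d) * (N : ℝ) ^ (2 * d - 1) := by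
        have : (N : ℝ) ^ (d - 1) ≤ (N : ℝ) ^ (2 * d - 1) :=
          Real.rpow_le_rpow_of_exponent_le (by exact_mod_cast hN) (by linarith)
        rw [add_mul, one_mul, one_div_mul_eq_div]
        linarith
  have tail : ∑ k ∈ range M,
      (((N + k : ℕ) : ℝ) + 1) ^ (d - 1) * (N + (((N + k : ℕ) : ℝ) + 1)) ^ (d - 1)
      ≤ (N : ℝ) ^ (2 * d - 1) / (1 - 2 * d) := calc
    _ ≤ ∑ k ∈ range M, ((N : ℝ) + (k + 1)) ^ (2 * d - 2) := by
        refine sum_le_sum fun k _ => ?_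
        have hx : (0 : ℝ) < N + (k + 1) := by positivity
        calc _ ≤ ((N : ℝ) + (k + 1)) ^ (d - 1) * ((N : ℝ) + (k + 1)) ^ (d - 1) := by
              push_cast
              rw [add_assoc]
              exact mul_le_mul_of_nonneg_left
                (Real.rpow_le_rpow_of_nonpos hx (by linarith) (by linarith)) (by positivity)
          _ = _ := by rw [← Real.rpow_add hx]; ring_nf
    _ ≤ _ := by
        rw [show 1 - 2 * d = -(2 * d - 2 + 1) by ring, show 2 * d - 1 = 2 * d - 2 + 1 by ring]
        exact sum_range_add_succ_rpow_le_of_lt_neg_one hN0 (by linarith) M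
  calc _ ≤ ∑ j ∈ range (N + M), ((j : ℝ) + 1) ^ (d - 1) * (N + ((j : ℝ) + 1)) ^ (d - 1) :=
        sum_le_sum_of_subset_of_nonneg (range_subset_range.2 (Nat.le_add_left M N))
          fun _ _ _ => by positivity
    _ ≤ (1 + 1 / d) * (N : ℝ) ^ (2 * d - 1) + (N : ℝ) ^ (2 * d - 1) / (1 - 2 * d) := by
        rw [sum_range_add]; exact add_le_add head tail
    _ = _ := by ring

lemma sum_range_inv_mul_rpow_mul_rpow_add_le {d : ℝ} (hd0 : 0 < d) (hd : d < 1 / 2) {m n : ℕ}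
    (hm : 0 < m) (hn : 1 ≤ n) (M : ℕ) :
    ∑ j ∈ range M,
        ((m : ℝ)⁻¹ * ((j : ℝ) + 1)) ^ (d - 1) * (n + (m : ℝ)⁻¹ * ((j : ℝ) + 1)) ^ (d - 1)
      ≤ m * (1 + 1 / d + 1 / (1 - 2 * d)) * (n : ℝ) ^ (2 * d - 1) := by
  have hm0 : (0 : ℝ) < m := by exact_mod_cast hm
  have hinv : ((m : ℝ)⁻¹) ^ (d - 1) = (m : ℝ) ^ (1 - d) := by
    rw [Real.inv_rpow hm0.le, ← Real.rpow_neg hm0.le, neg_sub]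
  have hscale : ∀ x : ℝ, 0 ≤ x → ((m : ℝ)⁻¹ * x) ^ (d - 1) * (n + (m : ℝ)⁻¹ * x) ^ (d - 1)
      = (m : ℝ) ^ (2 - 2 * d) * (x ^ (d - 1) * ((m * n : ℕ) + x) ^ (d - 1)) := by
    intro x hx
    have : (n : ℝ) + (m : ℝ)⁻¹ * x = (m : ℝ)⁻¹ * ((m * n : ℕ) + x) := by
      push_cast; field_simp
    rw [this, Real.mul_rpow (by positivity) hx, Real.mul_rpow (by positivity) (by positivity),
      hinv, show 2 - 2 * d = (1 - d) + (1 - d) by ring, Real.rpow_add hm0]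
    ring
  have hmn : ((m * n : ℕ) : ℝ) ^ (2 * d - 1) = (m : ℝ) ^ (2 * d - 1) * (n : ℝ) ^ (2 * d - 1) := by
    push_cast; exact Real.mul_rpow hm0.le n.cast_nonneg
  calc _ = (m : ℝ) ^ (2 - 2 * d) * ∑ j ∈ range M,
        ((j : ℝ) + 1) ^ (d - 1) * ((m * n : ℕ) + ((j : ℝ) + 1)) ^ (d - 1) := by
        rw [mul_sum]; exact sum_congr rfl fun j _ => hscale _ (by positivity)
    _ ≤ (m : ℝ) ^ (2 - 2 * d) *
          ((1 + 1 / d + 1 / (1 - 2 * d)) * ((m * n : ℕ) : ℝ) ^ (2 * d - 1)) :=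
        mul_le_mul_of_nonneg_left
          (sum_range_rpow_mul_rpow_add_le hd0 hd (Nat.one_le_iff_ne_zero.2 (by positivity)) M)
          (by positivity)
    _ = _ := by
        have hm1 : (m : ℝ) ^ (2 - 2 * d) * (m : ℝ) ^ (2 * d - 1) = m := by
          rw [← Real.rpow_add hm0]; norm_num
        rw [hmn]
        linear_combination (1 + 1 / d + 1 / (1 - 2 * d)) * (n : ℝ) ^ (2 * d - 1) * hm1

lemma tsum_int_eq_tsum_nat_succ {α : Type*} [AddCommMonoid α] [TopologicalSpace α] {f : ℤ → α}
    (hf : ∀ i ≤ 0, f i = 0) : ∑' i, f i = ∑' j : ℕ, f (j + 1) := by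
  refine (Function.Injective.tsum_eq (g := fun j : ℕ => (j : ℤ) + 1)
    (fun a b hab => by simpa using hab) (Function.support_subset_iff'.2 fun i hi => hf i ?_)).symm
  by_contra! hpos
  exact hi ⟨(i - 1).toNat, by simp; omega⟩

lemma abs_mul_weight_le {f g : ℝ → ℝ} {A C d a s x t : ℝ} (hd : d ≤ 1) (hx : 0 < x)
    (hfx : |f x| ≤ A * x ^ (d - 1)) (hs : 1 ≤ s) (hst : s + x ≤ t)
    (hg0 : 0 ≤ g t) (hgt : g t ≤ g s) :
    |f x * (C * ((if 1 < t then g t * t ^ (d - 1) else 0) + (if a ≤ t ∧ t ≤ 1 then 1 else 0)))|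
      ≤ |C| * A * g s * (x ^ (d - 1) * (s + x) ^ (d - 1)) := by
  have ht : 1 < t := by linarith
  have hpow : t ^ (d - 1) ≤ (s + x) ^ (d - 1) :=
    Real.rpow_le_rpow_of_nonpos (by linarith) hst (by linarith)
  rw [if_pos ht, if_neg fun h => h.2.not_gt ht, add_zero, abs_mul, abs_mul, abs_mul,
    abs_of_nonneg hg0, abs_of_nonneg (Real.rpow_nonneg (by linarith) _)]
  calc |f x| * (|C| * (g t * t ^ (d - 1)))
      ≤ A * x ^ (d - 1) * (|C| * (g s * (s + x) ^ (d - 1))) :=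
        mul_le_mul hfx (by gcongr; linarith) (by positivity) ((abs_nonneg _).trans hfx)
    _ = _ := by ring

theorem sum_f_v_bigO_general (f g : ℝ → ℝ) (d Cd C K : ℝ) (m : ℕ) (hm : 0 < m) (h : ℕ)
    (hd0 : 0 < d) (hd : d < 1/2)
    (hbddf : ∀ t > (0:ℝ), |f t| ≤ K * max 1 (t ^ (d - 1)))
    (hzero : ∀ t ≤ (0:ℝ), f t = 0)
    (hasymp : Tendsto (fun t => f t / t ^ (d - 1)) atTop (nhds Cd))
    (hg_pos : ∀ x ≥ (1:ℝ), 0 < g x)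
    (hg_anti : ∀ x y, (1:ℝ) ≤ x → x ≤ y → g y ≤ g x) :
    (fun n : ℕ => ∑' i : ℤ,
        |f ((m:ℝ)⁻¹ * i) *
          (C * ((if 1 < (n + h + (m:ℝ)⁻¹ * i : ℝ) then
                  g (n + h + (m:ℝ)⁻¹ * i) * (n + h + (m:ℝ)⁻¹ * i) ^ (d - 1) else 0)
            + (if -(m:ℝ)⁻¹ ≤ (n + h + (m:ℝ)⁻¹ * i : ℝ) ∧ (n + h + (m:ℝ)⁻¹ * i : ℝ) ≤ 1
                then 1 else 0)))|)
      =O[atTop] (fun n : ℕ => (n : ℝ) ^ (2 * d - 1) * g n) := by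
  obtain ⟨A, hA0, hA⟩ := exists_abs_le_mul_rpow_of_tendsto (by linarith : d - 1 ≤ 0) hbddf hasymp
  refine IsBigO.of_bound (|C| * A * (m * (1 + 1 / d + 1 / (1 - 2 * d)))) ?_
  filter_upwards [eventually_ge_atTop 1] with n hn
  have hn1 : (1 : ℝ) ≤ n := by exact_mod_cast hn
  have hgn : 0 < g n := hg_pos n hn1
  rw [tsum_int_eq_tsum_nat_succ fun i hi => by
    rw [hzero _ (mul_nonpos_of_nonneg_of_nonpos (by positivity) (by exact_mod_cast hi)),
      zero_mul, abs_zero]]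
  simp only [Int.cast_add, Int.cast_natCast, Int.cast_one]
  set u : ℕ → ℝ := fun j =>
    ((m : ℝ)⁻¹ * ((j : ℝ) + 1)) ^ (d - 1) * (n + (m : ℝ)⁻¹ * ((j : ℝ) + 1)) ^ (d - 1)
  have hu0 : ∀ j, 0 ≤ u j := fun j => by positivity
  have hsum := sum_range_inv_mul_rpow_mul_rpow_add_le hd0 hd hm hn
  have hh : (0 : ℝ) ≤ h := h.cast_nonneg
  have hterm := fun j : ℕ =>
    have hx : 0 < (m : ℝ)⁻¹ * ((j : ℝ) + 1) := by positivity
    abs_mul_weight_le (f := f) (C := C) (a := -(m : ℝ)⁻¹)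
      (t := n + h + (m : ℝ)⁻¹ * ((j : ℝ) + 1)) (by linarith) hx (hA _ hx) hn1 (by linarith)
      (hg_pos _ (by linarith)).le (hg_anti _ _ hn1 (by linarith))
  have hus : Summable u := summable_of_sum_range_le hu0 hsum
  rw [Real.norm_of_nonneg (tsum_nonneg fun _ => abs_nonneg _),
    Real.norm_of_nonneg (by positivity)]
  calc _ ≤ ∑' j, |C| * A * g n * u j :=
        Summable.tsum_le_tsum hterm
          ((hus.mul_left _).of_nonneg_of_le (fun _ => abs_nonneg _) hterm) (hus.mul_left _)
    _ ≤ |C| * A * g n * (m * (1 + 1 / d + 1 / (1 - 2 * d)) * (n : ℝ) ^ (2 * d - 1)) := by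
        rw [tsum_mul_left]; gcongr; exact Real.tsum_le_of_sum_range_le hu0 hsum
    _ = _ := by ring

/-- With `v(t) = C(g(t) t^{d-1} 1_{(1,∞)}(t) + 1_{[-ε,1]}(t))`, the sum
`Σ_{i∈ℤ} |f(εi) v(n+h+εi)|` is `O(n^{2d-1} g(n))`. -/
theorem sum_f_v_bigO (f g : ℝ → ℝ) (d Cd C K : ℝ) (m : ℕ) (hm : 0 < m) (h : ℕ)
    (hd0 : 0 < d) (hd : d < 1/2) (hCd : 0 < Cd) (hC : 0 < C) (hK : 0 < K)
    (hbddf : ∀ t > (0:ℝ), |f t| ≤ K * max 1 (t ^ (d - 1)))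
    (hzero : ∀ t ≤ (0:ℝ), f t = 0)
    (hasymp : Tendsto (fun t => f t / t ^ (d - 1)) atTop (nhds Cd))
    (hg_pos : ∀ x ≥ (1:ℝ), 0 < g x)
    (hg_bdd : ∃ M, ∀ x ≥ (1:ℝ), g x ≤ M)
    (hg_anti : ∀ x y, (1:ℝ) ≤ x → x ≤ y → g y ≤ g x)
    (hg_lim : Tendsto g atTop (nhds 0)) :
    (fun n : ℕ => ∑' i : ℤ,
        |f ((m:ℝ)⁻¹ * i) *
          (C * ((if 1 < (n + h + (m:ℝ)⁻¹ * i : ℝ) then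
                  g (n + h + (m:ℝ)⁻¹ * i) * (n + h + (m:ℝ)⁻¹ * i) ^ (d - 1) else 0)
            + (if -(m:ℝ)⁻¹ ≤ (n + h + (m:ℝ)⁻¹ * i : ℝ) ∧ (n + h + (m:ℝ)⁻¹ * i : ℝ) ≤ 1
                then 1 else 0)))|)
      =O[atTop] (fun n : ℕ => (n : ℝ) ^ (2 * d - 1) * g n) :=
  sum_f_v_bigO_general f g d Cd C K m hm h hd0 hd hbddf hzero hasymp hg_pos hg_anti
end

section
/- Let w(t) := C(t^{2d−2} 1_{(1,∞)}(t) + 1_{[−ε,1]}(t)) with d ∈ (0, 1/2), C > 0, ε = 1/m for m ∈ ℕ. Then for every integer n ≥ 1, Σ_{i∈ℤ} w(εi) w(εi + n) = O(n^{2d−2}) as n → ∞, and consequently Σ_{t,s=1}^N Σ_{i∈ℤ} w(εi) w(εi + s − t) = O(N) as N → ∞. -/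
/-!
The weight vanishes below `-1`, so for `x ≥ 2` every nonzero term of `Σᵢ w(εi) w(εi + x)` has
`εi + x ≥ x - 1 ≥ x / 2`, where the tail bound `w(t) ≤ C t^{2d-2}` applies: the correlation is at
most `C (x/2)^{2d-2} Σᵢ w(εi)`. As `2d - 2 < -1` this is summable over the shifts `n ∈ ℤ` (the
correlation is even in `n`, because for `ε = 1/m` an integer shift is a translation of the
lattice `εℤ`), so each row `Σ_s F(s - t)` of the double sum is at most `Σ_{n ∈ ℤ} F(n)`.
-/

open Filter Asymptotics

theorem tsum_mul_le_of_le_of_ne_zero {ι : Type*} {u v : ι → ℝ} {B : ℝ} (hu : ∀ i, 0 ≤ u i)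
    (hv : ∀ i, 0 ≤ v i) (hsu : Summable u) (hB : ∀ i, u i ≠ 0 → v i ≤ B) :
    ∑' i, u i * v i ≤ B * ∑' i, u i := by
  have hle : ∀ i, u i * v i ≤ B * u i := fun i => by
    rcases eq_or_ne (u i) 0 with h | h
    · simp [h]
    · rw [mul_comm]; exact mul_le_mul_of_nonneg_right (hB i h) (hu i)
  rw [← tsum_mul_left]
  exact (Summable.of_nonneg_of_le (fun i => mul_nonneg (hu i) (hv i)) hle
    (hsu.mul_left B)).tsum_le_tsum hle (hsu.mul_left B)

theorem sum_Icc_sum_Icc_sub_le {f : ℤ → ℝ} (hf0 : ∀ n, 0 ≤ f n) (hf : Summable f) (N : ℕ) :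
    ∑ t ∈ Finset.Icc 1 N, ∑ s ∈ Finset.Icc 1 N, f ((s : ℤ) - t) ≤ N * ∑' n, f n := by
  have hrow : ∀ t : ℕ, ∑ s ∈ Finset.Icc 1 N, f ((s : ℤ) - t) ≤ ∑' n, f n := fun t => by
    have hinj : Function.Injective (fun s : ℕ => (s : ℤ) - t) := fun a b h => by
      simpa using h
    calc ∑ s ∈ Finset.Icc 1 N, f ((s : ℤ) - t)
        ≤ ∑' s : ℕ, f ((s : ℤ) - t) :=
          (hf.comp_injective hinj).sum_le_tsum _ fun s _ => hf0 _
      _ ≤ ∑' n, f n := tsum_comp_le_tsum_of_inj hf hf0 hinj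
  calc _ ≤ ∑ _t ∈ Finset.Icc 1 N, ∑' n, f n := Finset.sum_le_sum fun t _ => hrow t
    _ = N * ∑' n, f n := by simp

theorem isBigO_sum_Icc_sum_Icc_sub {f : ℤ → ℝ} (hf0 : ∀ n, 0 ≤ f n) (hf : Summable f) :
    (fun N : ℕ => ∑ t ∈ Finset.Icc 1 N, ∑ s ∈ Finset.Icc 1 N, f ((s : ℤ) - t))
      =O[atTop] (fun N : ℕ => (N : ℝ)) := by
  refine IsBigO.of_bound (∑' n, f n) (Eventually.of_forall fun N => ?_)
  rw [Real.norm_of_nonneg (Finset.sum_nonneg fun _ _ => Finset.sum_nonneg fun _ _ => hf0 _),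
    Real.norm_natCast, mul_comm]
  exact sum_Icc_sum_Icc_sub_le hf0 hf N

theorem tsum_mul_shift_neg_eq (w : ℝ → ℝ) {m : ℕ} (hm : m ≠ 0) (n : ℤ) :
    ∑' i : ℤ, w ((m : ℝ)⁻¹ * i) * w ((m : ℝ)⁻¹ * i + ((-n : ℤ) : ℝ))
      = ∑' i : ℤ, w ((m : ℝ)⁻¹ * i) * w ((m : ℝ)⁻¹ * i + n) := by
  have hshift : ∀ j : ℤ, (m : ℝ)⁻¹ * ((j + m * n : ℤ) : ℝ) = (m : ℝ)⁻¹ * j + n := fun j => by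
    push_cast
    field_simp
  rw [← (Equiv.addRight ((m : ℤ) * n)).tsum_eq]
  refine tsum_congr fun j => ?_
  simp only [Equiv.coe_addRight, hshift, Int.cast_neg, add_neg_cancel_right]
  ring

section DecayingWeight

variable {w : ℝ → ℝ} {C p : ℝ} (hw0 : ∀ t, 0 ≤ w t) (hsupp : ∀ t < -1, w t = 0)
  (htail : ∀ t, 1 ≤ t → w t ≤ C * t ^ p)
include hw0 hsupp htail

theorem summable_comp_int_mul (hp : p < -1) {ε : ℝ} (hε : 0 < ε) :
    Summable (fun i : ℤ => w (ε * i)) := by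
  have hlarge : ∀ᶠ n : ℕ in atTop, ε⁻¹ < n :=
    tendsto_natCast_atTop_atTop.eventually_gt_atTop ε⁻¹
  have hp_summable : Summable (fun n : ℕ => (n : ℝ) ^ p) := Real.summable_nat_rpow.mpr hp
  refine Summable.of_nat_of_neg (summable_of_isBigO_nat hp_summable ?_)
    (summable_of_isBigO_nat hp_summable ?_)
  · refine IsBigO.of_bound (C * ε ^ p) (hlarge.mono fun n hn => ?_)
    have h1 : 1 ≤ ε * n := by rw [inv_lt_iff_one_lt_mul₀ hε] at hn; linarith
    rw [Real.norm_of_nonneg (hw0 _), Real.norm_of_nonneg (by positivity), Int.cast_natCast,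
      mul_assoc, ← Real.mul_rpow hε.le n.cast_nonneg]
    exact htail _ h1
  · refine EventuallyEq.trans_isBigO (hlarge.mono fun n hn => ?_) (isBigO_zero _ _)
    have h1 : 1 < ε * n := by rw [inv_lt_iff_one_lt_mul₀ hε] at hn; linarith
    exact hsupp _ (by push_cast; linarith)

theorem tsum_mul_shift_le_of_two_le (hp : p ≤ 0) {ι : Type*} {τ : ι → ℝ}
    (hτ : Summable (fun i => w (τ i))) {x : ℝ} (hx : 2 ≤ x) :
    ∑' i, w (τ i) * w (τ i + x) ≤ C * (x / 2) ^ p * ∑' i, w (τ i) := by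
  have hC : 0 ≤ C := by simpa using (hw0 1).trans (htail 1 le_rfl)
  refine tsum_mul_le_of_le_of_ne_zero (fun i => hw0 _) (fun i => hw0 _) hτ fun i hi => ?_
  have hτi : -1 ≤ τ i := not_lt.mp fun h => hi (hsupp _ h)
  calc w (τ i + x) ≤ C * (τ i + x) ^ p := htail _ (by linarith)
    _ ≤ C * (x / 2) ^ p :=
      mul_le_mul_of_nonneg_left (Real.rpow_le_rpow_of_nonpos (by linarith) (by linarith) hp) hC

theorem isBigO_tsum_mul_shift (hp : p ≤ 0) {ε : ℝ} (hs : Summable (fun i : ℤ => w (ε * i))) :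
    (fun n : ℕ => ∑' i : ℤ, w (ε * i) * w (ε * i + n)) =O[atTop] (fun n : ℕ => (n : ℝ) ^ p) := by
  refine IsBigO.of_bound (C / 2 ^ p * ∑' i : ℤ, w (ε * i))
    ((eventually_ge_atTop 2).mono fun n hn => ?_)
  have hn' : (2 : ℝ) ≤ n := by exact_mod_cast hn
  rw [Real.norm_of_nonneg (tsum_nonneg fun i => mul_nonneg (hw0 _) (hw0 _)),
    Real.norm_of_nonneg (by positivity)]
  calc _ ≤ C * (n / 2 : ℝ) ^ p * ∑' i : ℤ, w (ε * i) :=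
        tsum_mul_shift_le_of_two_le hw0 hsupp htail hp hs hn'
    _ = _ := by rw [Real.div_rpow (by positivity) zero_le_two]; ring

end DecayingWeight

theorem summable_tsum_mul_shift_int {w : ℝ → ℝ} {m : ℕ} (hm : m ≠ 0) {p : ℝ} (hp : p < -1)
    (hF : (fun n : ℕ => ∑' i : ℤ, w ((m : ℝ)⁻¹ * i) * w ((m : ℝ)⁻¹ * i + n))
      =O[atTop] (fun n : ℕ => (n : ℝ) ^ p)) :
    Summable (fun n : ℤ => ∑' i : ℤ, w ((m : ℝ)⁻¹ * i) * w ((m : ℝ)⁻¹ * i + n)) := by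
  have hnat := summable_of_isBigO_nat (Real.summable_nat_rpow.mpr hp) hF
  refine Summable.of_nat_of_neg (by simpa using hnat) ?_
  simpa only [tsum_mul_shift_neg_eq w hm, Int.cast_natCast] using hnat

theorem sum_w_w_bigO_general (d C : ℝ) (m : ℕ) (hm : 0 < m)
    (hd : d < 1/2) (hC : 0 < C)
    (w : ℝ → ℝ)
    (hw : ∀ t : ℝ, w t =
      C * ((if 1 < t then t ^ (2 * d - 2) else 0)
        + (if -(m:ℝ)⁻¹ ≤ t ∧ t ≤ 1 then 1 else 0))) :
    ((fun n : ℕ => ∑' i : ℤ, w ((m:ℝ)⁻¹ * i) * w ((m:ℝ)⁻¹ * i + n))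
        =O[atTop] (fun n : ℕ => (n : ℝ) ^ (2 * d - 2)))
    ∧ ((fun N : ℕ => ∑ t ∈ Finset.Icc 1 N, ∑ s ∈ Finset.Icc 1 N,
          ∑' i : ℤ, w ((m:ℝ)⁻¹ * i) * w ((m:ℝ)⁻¹ * i + (s - t : ℤ)))
        =O[atTop] (fun N : ℕ => (N : ℝ))) := by
  have hp : 2 * d - 2 < -1 := by linarith
  have hε : 0 < (m : ℝ)⁻¹ := by positivity
  have hε1 : (m : ℝ)⁻¹ ≤ 1 := inv_le_one_of_one_le₀ (by exact_mod_cast hm)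
  have hw0 : ∀ t, 0 ≤ w t := fun t => by rw [hw t]; split_ifs <;> positivity
  have hsupp : ∀ t < -1, w t = 0 := fun t ht => by
    rw [hw t, if_neg (by linarith), if_neg (by rintro ⟨h, -⟩; linarith)]; simp
  have htail : ∀ t, 1 ≤ t → w t ≤ C * t ^ (2 * d - 2) := fun t ht => by
    rcases ht.lt_or_eq with ht | rfl
    · rw [hw t, if_pos ht, if_neg (by rintro ⟨-, h⟩; linarith)]; simp
    · rw [hw 1, if_neg (lt_irrefl 1), if_pos ⟨by linarith, le_rfl⟩]; simp
  have hF := isBigO_tsum_mul_shift hw0 hsupp htail (by linarith)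
    (summable_comp_int_mul hw0 hsupp htail hp hε)
  exact ⟨hF, isBigO_sum_Icc_sum_Icc_sub (fun n => tsum_nonneg fun i => mul_nonneg (hw0 _) (hw0 _))
    (summable_tsum_mul_shift_int hm.ne' hp hF)⟩

/-- With `w(t) = C(t^{2d-2} 1_{(1,∞)}(t) + 1_{[-ε,1]}(t))`,
`Σ_{i∈ℤ} w(εi)w(εi+n) = O(n^{2d-2})` and the double sum over `t,s ∈ {1,…,N}` is `O(N)`. -/
theorem sum_w_w_bigO (d C : ℝ) (m : ℕ) (hm : 0 < m)
    (hd0 : 0 < d) (hd : d < 1/2) (hC : 0 < C)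
    (w : ℝ → ℝ)
    (hw : ∀ t : ℝ, w t =
      C * ((if 1 < t then t ^ (2 * d - 2) else 0)
        + (if -(m:ℝ)⁻¹ ≤ t ∧ t ≤ 1 then 1 else 0))) :
    ((fun n : ℕ => ∑' i : ℤ, w ((m:ℝ)⁻¹ * i) * w ((m:ℝ)⁻¹ * i + n))
        =O[atTop] (fun n : ℕ => (n : ℝ) ^ (2 * d - 2)))
    ∧ ((fun N : ℕ => ∑ t ∈ Finset.Icc 1 N, ∑ s ∈ Finset.Icc 1 N,
          ∑' i : ℤ, w ((m:ℝ)⁻¹ * i) * w ((m:ℝ)⁻¹ * i + (s - t : ℤ)))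
        =O[atTop] (fun N : ℕ => (N : ℝ))) :=
  sum_w_w_bigO_general d C m hm hd hC w hw
end

section
/- Let f : ℝ → ℝ be bounded, vanish on (−∞, 0], satisfy f(t) ~ C_d t^{d−1} as t → ∞ with d ∈ (0, 1/2) and C_d > 0, and be left-continuous. Define f_m := Σ_{k=0}^∞ f(k/m)·1_{[k/m, (k+1)/m)} and, for h ∈ ℕ₀, G_h(s) := Σ_{i∈ℤ} f(i+s)f(i+h+s) and G_{m,h}(s) := Σ_{i∈ℤ} f_m(i+s)f_m(i+h+s) for s ∈ [0,1]. Then G_{m,h} → G_h in L^{α/2}([0,1]) as m → ∞, for any α ∈ (2, 4). -/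
open MeasureTheory Filter Set Asymptotics
open scoped ENNReal Topology

/-!
Both `f` and its step approximations `f_m` (`m ≥ 1`) vanish on `(-∞, 0)` and are bounded by
`K (t + 2) ^ (d - 1)` on `[0, ∞)`: boundedness and the asymptotics give
`|f x| ≤ K (x + 3) ^ (d - 1)` for `x ≥ 0`, and `f_m t = f x` with `x ∈ (t - 1, t]`. Hence, for
`s ∈ [0, 1]`, the `i`-th terms of `G_{m,h}(s)` and `G_h(s)` are bounded by `K² |i + 2| ^ (2d - 2)`,
which is summable over `ℤ` because `d < 1/2`. Left-continuity gives `f_m → f` pointwise, dominated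
convergence for series gives `G_{m,h} → G_h` pointwise on `[0, 1]` under a uniform bound, and
dominated convergence for integrals then gives convergence in every `L^p([0, 1])`, `p < ∞`.
-/

theorem tendsto_eLpNorm_zero_of_norm_le {α E : Type*} [MeasurableSpace α] [NormedAddCommGroup E]
    {μ : Measure α} [IsFiniteMeasure μ] {p : ℝ≥0∞} (hp : p ≠ ∞) {u : ℕ → α → E} {C : ℝ}
    (hu : ∀ n, AEStronglyMeasurable (u n) μ) (hC : ∀ n, ∀ᵐ x ∂μ, ‖u n x‖ ≤ C)
    (hlim : ∀ᵐ x ∂μ, Tendsto (fun n => u n x) atTop (𝓝 0)) :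
    Tendsto (fun n => eLpNorm (u n) p μ) atTop (𝓝 0) := by
  rcases eq_or_ne p 0 with rfl | hp0
  · simp
  have hp_pos : 0 < p.toReal := ENNReal.toReal_pos hp0 hp
  suffices Tendsto (fun n => ∫⁻ x, ‖u n x‖ₑ ^ p.toReal ∂μ) atTop (𝓝 0) by
    simpa [eLpNorm_eq_lintegral_rpow_enorm_toReal hp0 hp, hp_pos] using
      this.ennrpow_const (1 / p.toReal)
  have hlim_rpow : ∀ᵐ x ∂μ, Tendsto (fun n => ‖u n x‖ₑ ^ p.toReal) atTop (𝓝 0) := by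
    filter_upwards [hlim] with x hx
    simpa [hp_pos] using (continuous_enorm.tendsto 0 |>.comp hx).ennrpow_const p.toReal
  have hbound : ∀ n, (fun x => ‖u n x‖ₑ ^ p.toReal) ≤ᵐ[μ] fun _ => ENNReal.ofReal C ^ p.toReal :=
    fun n => by
      filter_upwards [hC n] with x hx
      rw [← ofReal_norm]
      gcongr
  simpa using tendsto_lintegral_of_dominated_convergence' _ (fun n => (hu n).enorm.pow_const _)
    hbound (by simp [ENNReal.mul_eq_top]) hlim_rpow

theorem exists_abs_le_mul_of_isBigO_atTop {f φ : ℝ → ℝ} (hf : ∃ M, ∀ t, |f t| ≤ M)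
    (hfφ : f =O[atTop] φ) (hφ_pos : ∀ t, 0 ≤ t → 0 < φ t) (hφ_anti : AntitoneOn φ (Ici 0)) :
    ∃ K, 0 ≤ K ∧ ∀ t, 0 ≤ t → |f t| ≤ K * φ t := by
  obtain ⟨M, hM⟩ := hf
  obtain ⟨C, hC⟩ := hfφ.bound
  obtain ⟨T, hT⟩ := eventually_atTop.mp (hC.and (eventually_ge_atTop 0))
  have hM0 : 0 ≤ M := (abs_nonneg _).trans (hM 0)
  have hφT := hφ_pos T (hT T le_rfl).2
  refine ⟨max C (M / φ T), (div_nonneg hM0 hφT.le).trans (le_max_right _ _), fun t ht => ?_⟩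
  have hφt := hφ_pos t ht
  rcases le_total T t with hTt | htT
  · calc |f t| ≤ C * |φ t| := (hT t hTt).1
      _ ≤ max C (M / φ T) * φ t := by rw [abs_of_pos hφt]; gcongr; exact le_max_left _ _
  · calc |f t| ≤ M / φ T * φ T := by rw [div_mul_cancel₀ _ hφT.ne']; exact hM t
      _ ≤ max C (M / φ T) * φ t := by
        gcongr
        · exact le_max_right _ _
        · exact hφ_anti ht (hT T le_rfl).2 htT

theorem rpow_isBigO_rpow_add {r c : ℝ} (hr : r ≤ 0) (hc : 0 ≤ c) :
    (fun t : ℝ => t ^ r) =O[atTop] fun t => (t + c) ^ r := by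
  refine IsBigO.of_bound (2 ^ (-r)) ?_
  filter_upwards [eventually_ge_atTop c, eventually_gt_atTop 0] with t hct ht
  rw [Real.norm_of_nonneg (by positivity), Real.norm_of_nonneg (by positivity)]
  calc t ^ r = 2 ^ (-r) * (2 * t) ^ r := by
        rw [Real.mul_rpow zero_le_two ht.le, ← mul_assoc, ← Real.rpow_add two_pos]; simp
    _ ≤ 2 ^ (-r) * (t + c) ^ r :=
        mul_le_mul_of_nonneg_left (Real.rpow_le_rpow_of_nonpos (by positivity) (by linarith) hr)
          (by positivity)

noncomputable def envelope (K r t : ℝ) : ℝ := if 0 ≤ t then K * (t + 2) ^ r else 0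

/-- `lagSum f h` and `lagSum (stepApprox f m) h` are the paper's `G_h` and `G_{m,h}`. -/
noncomputable def lagSum (g : ℝ → ℝ) (a s : ℝ) : ℝ := ∑' i : ℤ, g (i + s) * g (i + a + s)

section Envelope

variable {g : ℝ → ℝ} {K r a s : ℝ}

theorem abs_le_mul_rpow_of_le_envelope (hg : ∀ t, |g t| ≤ envelope K r t) (hK : 0 ≤ K)
    (hr : r ≤ 0) {x t : ℝ} (hx : 0 < x + 2) (hxt : x ≤ t) : |g t| ≤ K * (x + 2) ^ r := by
  refine (hg t).trans ?_
  unfold envelope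
  split_ifs
  · exact mul_le_mul_of_nonneg_left (Real.rpow_le_rpow_of_nonpos hx (by linarith) hr) hK
  · positivity

theorem abs_mul_le_of_le_envelope (hg : ∀ t, |g t| ≤ envelope K r t) (hK : 0 ≤ K) (hr : r ≤ 0)
    (ha : 0 ≤ a) (hs : s ∈ Icc (0 : ℝ) 1) (i : ℤ) :
    |g (i + s) * g (i + a + s)| ≤ K ^ 2 * |(i : ℝ) + 2| ^ (2 * r) := by
  rcases lt_or_ge ((i : ℝ) + s) 0 with hneg | hnn
  · have hzero : g (i + s) = 0 :=
      abs_nonpos_iff.mp (by simpa [envelope, hneg.not_ge] using hg (i + s))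
    rw [hzero, zero_mul, abs_zero]
    positivity
  · have hi : 0 < (i : ℝ) + 2 := by linarith [hs.2]
    have h₁ := abs_le_mul_rpow_of_le_envelope hg hK hr hi (by linarith [hs.1] : (i : ℝ) ≤ i + s)
    have h₂ := abs_le_mul_rpow_of_le_envelope hg hK hr hi (by linarith [hs.1] : (i : ℝ) ≤ i + a + s)
    calc |g (i + s) * g (i + a + s)| ≤ (K * ((i : ℝ) + 2) ^ r) * (K * ((i : ℝ) + 2) ^ r) := by
          rw [abs_mul]; exact mul_le_mul h₁ h₂ (abs_nonneg _) (by positivity)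
      _ = K ^ 2 * |(i : ℝ) + 2| ^ (2 * r) := by
          rw [abs_of_pos hi, two_mul, Real.rpow_add hi]; ring

theorem summable_mul_abs_int_add_two_rpow (K : ℝ) (hr : r < -1 / 2) :
    Summable fun i : ℤ => K ^ 2 * |(i : ℝ) + 2| ^ (2 * r) :=
  (((Real.summable_one_div_int_add_rpow 2 (-2 * r)).mpr (by linarith)).congr fun i => by
    rw [one_div, ← Real.rpow_neg (abs_nonneg _), neg_mul, neg_neg]).mul_left _

theorem summable_lagSum (hg : ∀ t, |g t| ≤ envelope K r t) (hK : 0 ≤ K) (hr : r < -1 / 2)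
    (ha : 0 ≤ a) (hs : s ∈ Icc (0 : ℝ) 1) : Summable fun i : ℤ => g (i + s) * g (i + a + s) :=
  (summable_mul_abs_int_add_two_rpow K hr).of_norm_bounded
    (abs_mul_le_of_le_envelope hg hK (by linarith) ha hs)

theorem abs_lagSum_le (hg : ∀ t, |g t| ≤ envelope K r t) (hK : 0 ≤ K) (hr : r < -1 / 2)
    (ha : 0 ≤ a) (hs : s ∈ Icc (0 : ℝ) 1) :
    |lagSum g a s| ≤ ∑' i : ℤ, K ^ 2 * |(i : ℝ) + 2| ^ (2 * r) := by
  rw [← Real.norm_eq_abs]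
  exact tsum_of_norm_bounded (summable_mul_abs_int_add_two_rpow K hr).hasSum
    (abs_mul_le_of_le_envelope hg hK (by linarith) ha hs)

theorem tendsto_lagSum {ι : Type*} {l : Filter ι} {u : ι → ℝ → ℝ}
    (hu : ∀ n t, |u n t| ≤ envelope K r t) (hK : 0 ≤ K) (hr : r < -1 / 2)
    (hlim : ∀ t, Tendsto (u · t) l (𝓝 (g t))) (ha : 0 ≤ a) (hs : s ∈ Icc (0 : ℝ) 1) :
    Tendsto (fun n => lagSum (u n) a s) l (𝓝 (lagSum g a s)) :=
  tendsto_tsum_of_dominated_convergence (summable_mul_abs_int_add_two_rpow K hr)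
    (fun i => (hlim _).mul (hlim _))
    (.of_forall fun n => abs_mul_le_of_le_envelope (hu n) hK (by linarith) ha hs)

theorem aestronglyMeasurable_lagSum (hgm : Measurable g) (hg : ∀ t, |g t| ≤ envelope K r t)
    (hK : 0 ≤ K) (hr : r < -1 / 2) (ha : 0 ≤ a) :
    AEStronglyMeasurable (lagSum g a) (volume.restrict (Icc 0 1)) := by
  refine aestronglyMeasurable_of_tendsto_ae (atTop : Filter (Finset ℤ))
    (f := fun S s => ∑ i ∈ S, g (i + s) * g (i + a + s)) (fun S => ?_) ?_
  · exact (S.measurable_sum fun i _ => (hgm.comp (measurable_const_add _)).mul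
      (hgm.comp (measurable_const_add _))).aestronglyMeasurable
  · filter_upwards [ae_restrict_mem measurableSet_Icc] with s hs
    exact (summable_lagSum hg hK hr ha hs).hasSum

theorem tendsto_eLpNorm_lagSum_sub {u : ℕ → ℝ → ℝ} {p : ℝ≥0∞} (hp : p ≠ ∞)
    (hu : ∀ n t, |u n t| ≤ envelope K r t) (hK : 0 ≤ K) (hr : r < -1 / 2)
    (hmeas : ∀ n, Measurable (u n)) (hlim : ∀ t, Tendsto (u · t) atTop (𝓝 (g t))) (ha : 0 ≤ a) :
    Tendsto (fun n => eLpNorm (fun s => lagSum (u n) a s - lagSum g a s) p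
      (volume.restrict (Icc 0 1))) atTop (𝓝 0) := by
  have hg : ∀ t, |g t| ≤ envelope K r t := fun t =>
    le_of_tendsto' (hlim t).abs fun n => hu n t
  have hgm : Measurable g := measurable_of_tendsto_metrizable hmeas (tendsto_pi_nhds.mpr hlim)
  set S := ∑' i : ℤ, K ^ 2 * |(i : ℝ) + 2| ^ (2 * r)
  refine tendsto_eLpNorm_zero_of_norm_le hp (C := S + S)
    (fun n => (aestronglyMeasurable_lagSum (hmeas n) (hu n) hK hr ha).sub
      (aestronglyMeasurable_lagSum hgm hg hK hr ha)) (fun n => ?_) ?_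
  · filter_upwards [ae_restrict_mem measurableSet_Icc] with s hs
    exact (norm_sub_le _ _).trans
      (add_le_add (abs_lagSum_le (hu n) hK hr ha hs) (abs_lagSum_le hg hK hr ha hs))
  · filter_upwards [ae_restrict_mem measurableSet_Icc] with s hs
    simpa using (tendsto_lagSum hu hK hr hlim ha hs).sub_const (lagSum g a s)

end Envelope

noncomputable def stepApprox (f : ℝ → ℝ) (m : ℕ) (t : ℝ) : ℝ :=
  if 0 ≤ t then f ((⌊(m : ℝ) * t⌋ : ℝ) / m) else 0

theorem floor_mul_div_le (t : ℝ) {m : ℕ} (hm : 0 < m) : (⌊(m : ℝ) * t⌋ : ℝ) / m ≤ t := by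
  rw [div_le_iff₀ (by positivity), mul_comm]
  exact Int.floor_le _

theorem sub_one_div_lt_floor_mul_div (t : ℝ) {m : ℕ} (hm : 0 < m) :
    t - 1 / m < (⌊(m : ℝ) * t⌋ : ℝ) / m := by
  have hm' : (0 : ℝ) < m := by positivity
  rw [lt_div_iff₀ hm', sub_mul, one_div_mul_cancel hm'.ne', mul_comm]
  exact Int.sub_one_lt_floor _

theorem tendsto_floor_mul_div_nhdsLE (t : ℝ) :
    Tendsto (fun m : ℕ => (⌊(m : ℝ) * t⌋ : ℝ) / m) atTop (𝓝[≤] t) := by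
  have hlow : Tendsto (fun m : ℕ => t - 1 / (m : ℝ)) atTop (𝓝 t) := by
    simpa using (tendsto_const_nhds (x := t)).sub tendsto_one_div_atTop_nhds_zero_nat
  refine tendsto_nhdsWithin_iff.mpr ⟨tendsto_of_tendsto_of_tendsto_of_le_of_le' hlow
    tendsto_const_nhds ?_ ?_, ?_⟩ <;>
    filter_upwards [eventually_gt_atTop 0] with m hm
  · exact (sub_one_div_lt_floor_mul_div t hm).le
  · exact floor_mul_div_le t hm
  · exact floor_mul_div_le t hm

theorem tendsto_stepApprox {f : ℝ → ℝ} (hf : ∀ t < 0, f t = 0)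
    (hlc : ∀ x, ContinuousWithinAt f (Iic x) x) (t : ℝ) :
    Tendsto (fun m => stepApprox f m t) atTop (𝓝 (f t)) := by
  unfold stepApprox
  split_ifs with ht
  · exact (hlc t).tendsto.comp (tendsto_floor_mul_div_nhdsLE t)
  · rw [hf t (not_le.mp ht)]
    exact tendsto_const_nhds

theorem measurable_stepApprox (f : ℝ → ℝ) (m : ℕ) : Measurable (stepApprox f m) :=
  Measurable.ite measurableSet_Ici
    ((measurable_from_top (f := fun k : ℤ => f (k / m))).comp (measurable_const_mul _).floor)
    measurable_const

theorem abs_stepApprox_le_envelope {f : ℝ → ℝ} {K r : ℝ}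
    (hf : ∀ x, 0 ≤ x → |f x| ≤ K * (x + 3) ^ r) (hK : 0 ≤ K) (hr : r ≤ 0) {m : ℕ} (hm : 0 < m)
    (t : ℝ) :
    |stepApprox f m t| ≤ envelope K r t := by
  unfold stepApprox envelope
  split_ifs with ht
  · set x : ℝ := (⌊(m : ℝ) * t⌋ : ℝ) / m
    have hx : 0 ≤ x := div_nonneg (Int.cast_nonneg (Int.floor_nonneg.mpr (by positivity)))
      m.cast_nonneg
    have hxt : t - 1 ≤ x := by
      have : 1 / (m : ℝ) ≤ 1 := div_le_one_of_le₀ (Nat.one_le_cast.mpr hm) m.cast_nonneg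
      linarith [sub_one_div_lt_floor_mul_div t hm]
    exact (hf x hx).trans
      (mul_le_mul_of_nonneg_left (Real.rpow_le_rpow_of_nonpos (by linarith) (by linarith) hr) hK)
  · simp

theorem Gmh_tendsto_Gh_general (f : ℝ → ℝ) (d Cd α : ℝ) (h : ℕ)
    (hd : d < 1/2)
    (hbdd : ∃ M, ∀ t, |f t| ≤ M)
    (hzero : ∀ t ≤ (0:ℝ), f t = 0)
    (hasymp : Tendsto (fun t => f t / t ^ (d - 1)) atTop (nhds Cd))
    (hlc : ∀ x : ℝ, ContinuousWithinAt f (Set.Iic x) x)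
    (fm : ℕ → ℝ → ℝ)
    (hfm : ∀ m : ℕ, 0 < m → ∀ t : ℝ,
      fm m t = if 0 ≤ t then f ((⌊(m : ℝ) * t⌋ : ℝ) / m) else 0) :
    Tendsto (fun m : ℕ =>
        eLpNorm (fun s : ℝ =>
            (∑' i : ℤ, fm m (i + s) * fm m (i + h + s))
              - ∑' i : ℤ, f (i + s) * f (i + h + s))
          (ENNReal.ofReal (α / 2)) (volume.restrict (Set.Icc (0:ℝ) 1)))
      atTop (nhds 0) := by
  have hr : d - 1 ≤ 0 := by linarith
  have hfO : f =O[atTop] fun t => (t + 3) ^ (d - 1) :=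
    (isBigO_of_div_tendsto_nhds (by
      filter_upwards [eventually_gt_atTop 0] with t ht h0
      exact absurd h0 (Real.rpow_pos_of_pos ht _).ne') Cd hasymp).trans
      (rpow_isBigO_rpow_add hr (by norm_num))
  obtain ⟨K, hK, hfK⟩ := exists_abs_le_mul_of_isBigO_atTop hbdd hfO (fun t ht => by positivity)
    fun x hx y _ hxy => Real.rpow_le_rpow_of_nonpos (by linarith [mem_Ici.mp hx]) (by linarith) hr
  have hfm_eq : ∀ m : ℕ, fm (m + 1) = stepApprox f (m + 1) := fun m => funext (hfm _ m.succ_pos)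
  rw [← tendsto_add_atTop_iff_nat 1]
  simp only [hfm_eq]
  exact tendsto_eLpNorm_lagSum_sub ENNReal.ofReal_ne_top
    (fun m => abs_stepApprox_le_envelope hfK hK hr m.succ_pos) hK (by linarith)
    (fun m => measurable_stepApprox f _)
    (fun t => (tendsto_stepApprox (fun t ht => hzero t ht.le) hlc t).comp (tendsto_add_atTop_nat 1))
    h.cast_nonneg

/-- For left-continuous `f`, the step approximations `G_{m,h}` converge to `G_h` in
`L^{α/2}([0,1])` as `m → ∞`, for `α ∈ (2,4)`. -/
theorem Gmh_tendsto_Gh (f : ℝ → ℝ) (d Cd α : ℝ) (h : ℕ)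
    (hd0 : 0 < d) (hd : d < 1/2) (hCd : 0 < Cd) (hα1 : 2 < α) (hα2 : α < 4)
    (hbdd : ∃ M, ∀ t, |f t| ≤ M)
    (hzero : ∀ t ≤ (0:ℝ), f t = 0)
    (hasymp : Tendsto (fun t => f t / t ^ (d - 1)) atTop (nhds Cd))
    (hlc : ∀ x : ℝ, ContinuousWithinAt f (Set.Iic x) x)
    (fm : ℕ → ℝ → ℝ)
    (hfm : ∀ m : ℕ, 0 < m → ∀ t : ℝ,
      fm m t = if 0 ≤ t then f ((⌊(m : ℝ) * t⌋ : ℝ) / m) else 0) :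
    Tendsto (fun m : ℕ =>
        eLpNorm (fun s : ℝ =>
            (∑' i : ℤ, fm m (i + s) * fm m (i + h + s))
              - ∑' i : ℤ, f (i + s) * f (i + h + s))
          (ENNReal.ofReal (α / 2)) (volume.restrict (Set.Icc (0:ℝ) 1)))
      atTop (nhds 0) :=
  Gmh_tendsto_Gh_general f d Cd α h hd hbdd hzero hasymp hlc fm hfm
end
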